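/- arXiv:2604.15915 — 5 statements merged into one kernel-verified Lean document; each statement's English description precedes it below -/
import Mathlib

section
/- Let q ≥ 4 be a power of a prime p. Let S² be the set of pairs (g₁,g₂) ∈ 𝔽_q[T]² with g₂ ≠ 0 such that T ∤ gᵢ for i = 1, 2, and such that there exists a monic irreducible polynomial 𝔩 ∈ 𝔽_q[T], 𝔩 ≠ T, with ν_𝔩(g₁) = 0 and p ∤ ν_𝔩(g₂). Then the density 𝔡(S²) exists and equals (1 − 1/q)². -/
/-!
Pairs with `T ∤ g₁` and `T ∤ g₂` have density `(1 - 1/q)²`, so it suffices that those among them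
without a witness prime `𝔩` are negligible. For such a pair every prime factor of `g₂` not
dividing `g₁` occurs to a power divisible by `p ≥ 2`, and the part of `g₂` made of primes dividing
`g₁` is a square times a squarefree `a ∣ g₁`; thus `g₂ = a b² w^p`. The pair is then determined by
the factorizations `g₁ = a · (g₁ / a)` and by `(b, w)` with `deg b + deg w < N/2 + 1`, which leaves
`O(N² q^(3N/2))` possibilities out of roughly `q^(2N)`.
-/

open Polynomial UniqueFactorizationMonoid Filter Topology

theorem Multiset.exists_nodup_add_two_nsmul {α : Type*} [DecidableEq α] (s : Multiset α) :
    ∃ d w : Multiset α, d.Nodup ∧ s = d + 2 • w := by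
  induction s using Multiset.induction with
  | empty => exact ⟨0, 0, Multiset.nodup_zero, by simp⟩
  | cons a s ih =>
    obtain ⟨d, w, hd, rfl⟩ := ih
    by_cases ha : a ∈ d
    · refine ⟨d.erase a, a ::ₘ w, hd.erase a, ?_⟩
      conv_lhs => rw [← Multiset.cons_erase ha]
      simp only [two_nsmul, ← Multiset.singleton_add]
      abel
    · exact ⟨a ::ₘ d, w, Multiset.nodup_cons.mpr ⟨ha, hd⟩, by simp⟩

namespace UniqueFactorizationMonoid

variable {R : Type*} [CommMonoidWithZero R] [UniqueFactorizationMonoid R] [NormalizationMonoid R]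
  [DecidableEq R]

theorem pow_dvd_iff_le_count_normalizedFactors {l g : R} (hl : Irreducible l) (hg : g ≠ 0)
    {n : ℕ} : l ^ n ∣ g ↔ n ≤ (normalizedFactors g).count (normalize l) := by
  rw [pow_dvd_iff_le_emultiplicity, emultiplicity_eq_count_normalizedFactors hl hg, Nat.cast_le]

theorem exists_dvd_and_eq_mul_sq_mul_pow {f g : R} (hf : f ≠ 0) (hg : g ≠ 0) (p : ℕ)
    (h : ∀ l ∈ normalizedFactors g, ¬ l ∣ f → p ∣ (normalizedFactors g).count l) :
    ∃ a b w : R, a ∣ f ∧ g = a * b ^ 2 * w ^ p := by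
  classical
  obtain ⟨u, hu⟩ := prod_normalizedFactors hg
  set s := normalizedFactors g
  obtain ⟨t, ht⟩ := Multiset.exists_smul_of_dvd_count (k := p) (s.filter (¬ · ∣ f)) fun l hl => by
    rw [Multiset.mem_filter] at hl
    rw [Multiset.count_filter_of_pos (p := (¬ · ∣ f)) hl.2]
    exact h l hl.1 hl.2
  obtain ⟨d, b, hd, hdb⟩ := Multiset.exists_nodup_add_two_nsmul (s.filter (· ∣ f))
  -- `d` is duplicate-free and each of its elements divides `f`, so `d.prod ∣ f`
  have hd_le : d ≤ normalizedFactors f := by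
    refine (Multiset.le_iff_subset hd).mpr fun l hl => ?_
    have hl' : l ∈ s.filter (· ∣ f) := hdb ▸ Multiset.mem_add.mpr (Or.inl hl)
    rw [Multiset.mem_filter] at hl'
    exact (mem_normalizedFactors_iff' hf).mpr ⟨irreducible_of_normalized_factor l hl'.1,
      normalize_normalized_factor l hl'.1, hl'.2⟩
  refine ⟨d.prod * u, b.prod, t.prod, ?_, ?_⟩
  · exact Units.mul_right_dvd.mpr
      ((Multiset.prod_dvd_prod_of_le hd_le).trans (prod_normalizedFactors hf).dvd)
  · rw [← hu, ← Multiset.filter_add_not (· ∣ f) s, hdb, ht]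
    simp only [Multiset.prod_add, Multiset.prod_nsmul]
    ac_rfl

end UniqueFactorizationMonoid

theorem Real.pow_div_two_div_pow_le {Q : ℝ} (hQ : 1 ≤ Q) (N : ℕ) :
    Q ^ (N / 2) / Q ^ N ≤ (√Q)⁻¹ ^ N := by
  have hsq : √Q ^ 2 = Q := Real.sq_sqrt (by linarith)
  have hsN : 0 < √Q ^ N := by positivity
  calc Q ^ (N / 2) / Q ^ N = √Q ^ (2 * (N / 2)) / (√Q ^ N * √Q ^ N) := by
        rw [pow_mul, hsq, ← pow_add, ← two_mul, pow_mul, hsq]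
    _ ≤ √Q ^ N / (√Q ^ N * √Q ^ N) := by
        gcongr ?_ / _
        exact pow_le_pow_right₀ (Real.one_le_sqrt.mpr hQ) (Nat.mul_div_le N 2)
    _ = (√Q)⁻¹ ^ N := by rw [div_mul_cancel_left₀ hsN.ne', inv_pow]

theorem tendsto_sq_mul_pow_div_two_div_pow {Q : ℝ} (hQ : 1 < Q) :
    Tendsto (fun N : ℕ => (N : ℝ) ^ 2 * Q ^ (N / 2) / Q ^ N) atTop (𝓝 0) := by
  have hr : (√Q)⁻¹ < 1 := inv_lt_one_of_one_lt₀ (Real.lt_sqrt_of_sq_lt (by linarith))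
  refine squeeze_zero (fun N => by positivity) (fun N => ?_)
    (tendsto_pow_const_mul_const_pow_of_lt_one 2 (by positivity) hr)
  rw [mul_div_assoc]
  exact mul_le_mul_of_nonneg_left (Real.pow_div_two_div_pow_le hQ.le N) (by positivity)

theorem tendsto_sq_sub_div_of_tendsto_div_sq_zero {Q : ℝ} (hQ : 1 < Q) {B : ℕ → ℝ}
    (hB : Tendsto (fun N => B N / (Q ^ N) ^ 2) atTop (𝓝 0)) :
    Tendsto (fun n : ℕ => ((Q ^ (n + 1) - Q ^ n) ^ 2 - B (n + 1)) /
      (Q ^ (n + 1) * (Q ^ (n + 1) - 1))) atTop (𝓝 ((1 - 1 / Q) ^ 2)) := by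
  have hpow : Tendsto (fun n : ℕ => (Q ^ (n + 1))⁻¹) atTop (𝓝 0) :=
    tendsto_inv_atTop_zero.comp
      ((tendsto_pow_atTop_atTop_of_one_lt hQ).comp (tendsto_add_atTop_nat 1))
  have hlim := ((tendsto_const_nhds (x := (1 - 1 / Q) ^ 2)).sub
    (hB.comp (tendsto_add_atTop_nat 1))).div ((tendsto_const_nhds (x := (1 : ℝ))).sub hpow)
    (by norm_num)
  simp only [sub_zero, div_one] at hlim
  refine hlim.congr fun n => ?_
  have hx : 1 < Q ^ (n + 1) := one_lt_pow₀ hQ n.succ_ne_zero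
  have hx1 : Q ^ (n + 1) - 1 ≠ 0 := by linarith
  have hQ0 : Q ≠ 0 := by linarith
  simp only [Pi.div_apply, Function.comp_apply]
  field_simp
  ring

namespace Polynomial

variable {K : Type*} [Field K]

/-- Some monic irreducible `𝔩 ≠ T` has `ν_𝔩(g₁) = 0` and `p ∤ ν_𝔩(g₂)`. -/
def HasWitness (p : ℕ) (g : K[X] × K[X]) : Prop :=
  ∃ l : K[X], l.Monic ∧ Irreducible l ∧ l ≠ X ∧ ¬ l ∣ g.1 ∧
    ∃ k : ℕ, ¬ p ∣ k ∧ l ^ k ∣ g.2 ∧ ¬ l ^ (k + 1) ∣ g.2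

theorem exists_dvd_and_eq_mul_sq_mul_pow_of_not_hasWitness {p : ℕ} {f g : K[X]}
    (hf : ¬ X ∣ f) (hg : ¬ X ∣ g) (hw : ¬ HasWitness p (f, g)) :
    ∃ a b w : K[X], a ∣ f ∧ g = a * b ^ 2 * w ^ p := by
  classical
  have hg0 : g ≠ 0 := by rintro rfl; exact hg (dvd_zero X)
  refine exists_dvd_and_eq_mul_sq_mul_pow (by rintro rfl; exact hf (dvd_zero X)) hg0 p
    fun l hl hlf => ?_
  obtain ⟨hirr, hmonic, hlg⟩ := (Polynomial.mem_normalizedFactors_iff hg0).mp hl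
  have hpow (n : ℕ) : l ^ n ∣ g ↔ n ≤ (normalizedFactors g).count l := by
    rw [pow_dvd_iff_le_count_normalizedFactors hirr hg0, hmonic.normalize_eq_self]
  by_contra hpk
  exact hw ⟨l, hmonic, hirr, by rintro rfl; exact hg hlg, hlf, _, hpk, (hpow _).mpr le_rfl,
    fun h => by simpa using (hpow _).mp h⟩

variable (K)

theorem natCard_degreeLT (n : ℕ) : Nat.card (degreeLT K n) = Nat.card K ^ n := by
  rw [Nat.card_congr (degreeLTEquiv K n).toEquiv, Nat.card_fun, Nat.card_fin]

theorem ncard_degreeLT (n : ℕ) : (degreeLT K n : Set K[X]).ncard = Nat.card K ^ n := by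
  rw [← Nat.card_coe_set_eq, SetLike.coe_sort_coe, natCard_degreeLT]

theorem ncard_degreeLT_inter_X_dvd (n : ℕ) :
    ((degreeLT K (n + 1) : Set K[X]) ∩ {f | X ∣ f}).ncard = Nat.card K ^ n := by
  have : (degreeLT K (n + 1) : Set K[X]) ∩ {f | X ∣ f} = (· * X) '' degreeLT K n := by
    ext f
    simp only [Set.mem_inter_iff, SetLike.mem_coe, mem_degreeLT, Set.mem_ofPred_eq, Set.mem_image]
    constructor
    · rintro ⟨hf, g, rfl⟩
      rw [mul_comm, degree_mul_X, Nat.cast_succ, WithBot.add_lt_add_iff_right WithBot.one_ne_bot]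
        at hf
      exact ⟨g, hf, mul_comm _ _⟩
    · rintro ⟨g, hg, rfl⟩
      rw [degree_mul_X, Nat.cast_succ, WithBot.add_lt_add_iff_right WithBot.one_ne_bot]
      exact ⟨hg, dvd_mul_left _ _⟩
  rw [this, Set.ncard_image_of_injective _ (mul_left_injective₀ X_ne_zero), ncard_degreeLT]

/-- Codes `(i, a, h)` with `deg a ≤ i < N` and `deg h < N - i`: every pair `(a, h)` with
`deg a + deg h < N` has one. -/
abbrev FactorCode (N : ℕ) : Type _ :=
  Σ i : Fin N, degreeLT K (i + 1) × degreeLT K (N - i)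

variable {K} in
theorem FactorCode.exists_eq {N : ℕ} {a h : K[X]} (hah : a.natDegree + h.natDegree < N) :
    ∃ c : FactorCode K N, (c.2.1 : K[X]) = a ∧ (c.2.2 : K[X]) = h := by
  refine ⟨⟨⟨a.natDegree, by omega⟩, ⟨a, mem_degreeLT.2 ?_⟩, ⟨h, mem_degreeLT.2 ?_⟩⟩, rfl, rfl⟩
  · exact degree_le_natDegree.trans_lt (by exact_mod_cast a.natDegree.lt_succ_self)
  · exact degree_le_natDegree.trans_lt
      (by exact_mod_cast (by omega : h.natDegree < N - a.natDegree))

def primeToXPairs (N : ℕ) : Set (K[X] × K[X]) :=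
  ((degreeLT K N : Set K[X]) \ {f | X ∣ f}) ×ˢ ((degreeLT K N : Set K[X]) \ {f | X ∣ f})

theorem primeToXPairs_sdiff_subset_range {p : ℕ} (hp : 2 ≤ p) (N : ℕ) :
    primeToXPairs K N \ {g | HasWitness p g} ⊆
      Set.range fun c : FactorCode K N × FactorCode K (N / 2 + 1) =>
        ((c.1.2.1 : K[X]) * c.1.2.2, (c.1.2.1 : K[X]) * c.2.2.1 ^ 2 * c.2.2.2 ^ p) := by
  rintro ⟨f, g⟩ ⟨⟨⟨hfN, hfX⟩, hgN, hgX⟩, hw⟩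
  obtain ⟨a, b, w, ⟨h, rfl⟩, rfl⟩ := exists_dvd_and_eq_mul_sq_mul_pow_of_not_hasWitness hfX hgX hw
  have hah : a * h ≠ 0 := by rintro h0; exact hfX (h0 ▸ dvd_zero X)
  have habw : a * b ^ 2 * w ^ p ≠ 0 := by rintro h0; exact hgX (h0 ▸ dvd_zero X)
  have hdeg_f := (natDegree_lt_iff_degree_lt hah).mpr (mem_degreeLT.mp hfN)
  have hdeg_g := (natDegree_lt_iff_degree_lt habw).mpr (mem_degreeLT.mp hgN)
  have hab := left_ne_zero_of_mul habw
  rw [natDegree_mul (left_ne_zero_of_mul hah) (right_ne_zero_of_mul hah)] at hdeg_f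
  rw [natDegree_mul hab (right_ne_zero_of_mul habw),
    natDegree_mul (left_ne_zero_of_mul hab) (right_ne_zero_of_mul hab), natDegree_pow,
    natDegree_pow] at hdeg_g
  have hpw : 2 * w.natDegree ≤ p * w.natDegree := Nat.mul_le_mul_right _ hp
  obtain ⟨c₁, hc₁a, hc₁h⟩ := FactorCode.exists_eq hdeg_f
  obtain ⟨c₂, hc₂b, hc₂w⟩ := FactorCode.exists_eq (N := N / 2 + 1) (a := b) (h := w) (by omega)
  exact ⟨(c₁, c₂), by simp only [hc₁a, hc₁h, hc₂b, hc₂w]⟩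

theorem natCard_pairs_snd_ne_zero (N : ℕ) :
    Nat.card {g : K[X] × K[X] // g.2 ≠ 0 ∧ g.1.degree < N ∧ g.2.degree < N} =
      Nat.card K ^ N * (Nat.card K ^ N - 1) := by
  rw [Nat.card_congr (Equiv.subtypeEquivRight
      (q := (· ∈ (degreeLT K N : Set K[X]) ×ˢ ((degreeLT K N : Set K[X]) \ {0}))) fun g => ?_),
    Nat.card_coe_set_eq, Set.ncard_prod, Set.ncard_sdiff_singleton_of_mem (zero_mem _),
    ncard_degreeLT]
  simp only [Set.mem_prod, Set.mem_sdiff, SetLike.mem_coe, mem_degreeLT, Set.mem_singleton_iff]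
  tauto

variable [Finite K]

instance finite_degreeLT (n : ℕ) : Finite (degreeLT K n) :=
  .of_equiv _ (degreeLTEquiv K n).toEquiv.symm

theorem finite_coe_degreeLT (n : ℕ) : (degreeLT K n : Set K[X]).Finite :=
  Set.finite_coe_iff.mp (finite_degreeLT K n)

theorem finite_primeToXPairs (N : ℕ) : (primeToXPairs K N).Finite :=
  (finite_coe_degreeLT K N).sdiff.prod (finite_coe_degreeLT K N).sdiff

theorem ncard_degreeLT_sdiff_X_dvd (n : ℕ) :
    ((degreeLT K (n + 1) : Set K[X]) \ {f | X ∣ f}).ncard =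
      Nat.card K ^ (n + 1) - Nat.card K ^ n := by
  have := Set.ncard_inter_add_ncard_sdiff_eq_ncard (degreeLT K (n + 1) : Set K[X]) {f | X ∣ f}
    (finite_coe_degreeLT K _)
  rw [ncard_degreeLT, ncard_degreeLT_inter_X_dvd] at this
  omega

theorem ncard_primeToXPairs (n : ℕ) :
    (primeToXPairs K (n + 1)).ncard = (Nat.card K ^ (n + 1) - Nat.card K ^ n) ^ 2 := by
  rw [primeToXPairs, Set.ncard_prod, ncard_degreeLT_sdiff_X_dvd, sq]

theorem natCard_hasWitness_add_ncard_not_hasWitness (p N : ℕ) :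
    Nat.card {g : K[X] × K[X] // (g.2 ≠ 0 ∧ (¬ X ∣ g.1 ∧ ¬ X ∣ g.2) ∧ HasWitness p g) ∧
        g.1.degree < N ∧ g.2.degree < N} + (primeToXPairs K N \ {g | HasWitness p g}).ncard =
      (primeToXPairs K N).ncard := by
  rw [← Set.ncard_inter_add_ncard_sdiff_eq_ncard _ {g | HasWitness p g} (finite_primeToXPairs K N),
    ← Nat.card_coe_set_eq (primeToXPairs K N ∩ _)]
  congr 1
  refine Nat.card_congr (Equiv.subtypeEquivRight fun g => ?_)
  simp only [primeToXPairs, Set.mem_inter_iff, Set.mem_prod, Set.mem_sdiff, SetLike.mem_coe,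
    mem_degreeLT, Set.mem_ofPred_eq]
  exact ⟨fun ⟨⟨_, hX, hw⟩, hd⟩ => ⟨⟨⟨hd.1, hX.1⟩, hd.2, hX.2⟩, hw⟩,
    fun ⟨⟨⟨h₁, hX₁⟩, h₂, hX₂⟩, hw⟩ =>
      ⟨⟨by rintro h0; exact hX₂ (h0 ▸ dvd_zero X), ⟨hX₁, hX₂⟩, hw⟩, h₁, h₂⟩⟩

theorem natCard_factorCode (N : ℕ) : Nat.card (FactorCode K N) = N * Nat.card K ^ (N + 1) := by
  rw [Nat.card_sigma]
  simp only [Nat.card_prod, natCard_degreeLT, ← pow_add]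
  rw [Finset.sum_congr rfl fun (i : Fin N) _ => by rw [show (i : ℕ) + 1 + (N - i) = N + 1 by omega]]
  simp

theorem ncard_primeToXPairs_sdiff_le {p : ℕ} (hp : 2 ≤ p) (N : ℕ) :
    (primeToXPairs K N \ {g | HasWitness p g}).ncard ≤
      N * Nat.card K ^ (N + 1) * ((N / 2 + 1) * Nat.card K ^ (N / 2 + 1 + 1)) := by
  calc _ ≤ (Set.range _).ncard :=
        Set.ncard_le_ncard (primeToXPairs_sdiff_subset_range K hp N) (Set.finite_range _)
    _ ≤ Nat.card (FactorCode K N × FactorCode K (N / 2 + 1)) := by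
        rw [← Set.image_univ, ← Set.ncard_univ]
        exact Set.ncard_image_le
    _ = _ := by rw [Nat.card_prod, natCard_factorCode, natCard_factorCode]

theorem tendsto_ncard_primeToXPairs_sdiff_div {p : ℕ} (hp : 2 ≤ p) :
    Tendsto (fun N : ℕ => ((primeToXPairs K N \ {g | HasWitness p g}).ncard : ℝ) /
      ((Nat.card K : ℝ) ^ N) ^ 2) atTop (𝓝 0) := by
  have hQ : (1 : ℝ) < Nat.card K := by exact_mod_cast Finite.one_lt_card
  set Q : ℝ := ↑(Nat.card K) with hQ_def
  have hlim := (tendsto_sq_mul_pow_div_two_div_pow hQ).const_mul (Q ^ 3)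
  rw [mul_zero] at hlim
  refine squeeze_zero' (Eventually.of_forall fun N => by positivity) ?_ hlim
  filter_upwards [eventually_ge_atTop 1] with N hN
  have hM : ((N / 2 + 1 : ℕ) : ℝ) ≤ N := by exact_mod_cast (by omega : N / 2 + 1 ≤ N)
  have hB := ncard_primeToXPairs_sdiff_le K hp N
  calc _ ≤ (N * Q ^ (N + 1) * ((N / 2 + 1 : ℕ) * Q ^ (N / 2 + 1 + 1)) : ℝ) / (Q ^ N) ^ 2 := by
        gcongr; rw [hQ_def]; exact_mod_cast hB
    _ = Q ^ 3 * (N * (N / 2 + 1 : ℕ) * Q ^ (N / 2) / Q ^ N) := by field_simp; ring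
    _ ≤ Q ^ 3 * ((N : ℝ) ^ 2 * Q ^ (N / 2) / Q ^ N) := by gcongr; nlinarith

end Polynomial

theorem statement4_general (p q : ℕ) (hp : p.Prime)
    (K : Type) [Field K] [Fintype K] (hcard : Fintype.card K = q) :
    Filter.Tendsto
      (fun N : ℕ =>
        (Nat.card {g : Polynomial K × Polynomial K //
            (g.2 ≠ 0 ∧
              (¬ Polynomial.X ∣ g.1 ∧ ¬ Polynomial.X ∣ g.2) ∧
              ∃ l : Polynomial K, l.Monic ∧ Irreducible l ∧ l ≠ Polynomial.X ∧
                ¬ l ∣ g.1 ∧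
                ∃ k : ℕ, ¬ p ∣ k ∧ l ^ k ∣ g.2 ∧ ¬ l ^ (k + 1) ∣ g.2) ∧
            g.1.degree < (N : WithBot ℕ) ∧ g.2.degree < (N : WithBot ℕ)} : ℝ) /
        (Nat.card {g : Polynomial K × Polynomial K //
            g.2 ≠ 0 ∧
            g.1.degree < (N : WithBot ℕ) ∧ g.2.degree < (N : WithBot ℕ)} : ℝ))
      Filter.atTop (nhds ((1 - 1 / (q : ℝ)) ^ 2)) := by
  subst hcard
  simp only [← HasWitness.eq_1]
  have hQ : (1 : ℝ) < Nat.card K := by exact_mod_cast Finite.one_lt_card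
  rw [← Nat.card_eq_fintype_card, ← tendsto_add_atTop_iff_nat 1]
  refine (tendsto_sq_sub_div_of_tendsto_div_sq_zero hQ
    (tendsto_ncard_primeToXPairs_sdiff_div K hp.two_le)).congr fun n => ?_
  have hnum := natCard_hasWitness_add_ncard_not_hasWitness K p (n + 1)
  rw [ncard_primeToXPairs] at hnum
  have h₁ : Nat.card K ^ n ≤ Nat.card K ^ (n + 1) :=
    Nat.pow_le_pow_right Finite.card_pos n.le_succ
  have h₂ : 1 ≤ Nat.card K ^ (n + 1) := Nat.one_le_pow _ _ Finite.card_pos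
  rw [natCard_pairs_snd_ne_zero, eq_tsub_of_add_eq hnum, Nat.cast_sub (by omega), Nat.cast_mul,
    Nat.cast_sub h₂, Nat.cast_pow, Nat.cast_sub h₁]
  push_cast
  rfl

theorem statement4 (p q : ℕ) (hp : p.Prime) (hq : ∃ n : ℕ, q = p ^ n) (hq4 : 4 ≤ q)
    (K : Type) [Field K] [Fintype K] (hcard : Fintype.card K = q) :
    Filter.Tendsto
      (fun N : ℕ =>
        (Nat.card {g : Polynomial K × Polynomial K //
            (g.2 ≠ 0 ∧
              (¬ Polynomial.X ∣ g.1 ∧ ¬ Polynomial.X ∣ g.2) ∧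
              ∃ l : Polynomial K, l.Monic ∧ Irreducible l ∧ l ≠ Polynomial.X ∧
                ¬ l ∣ g.1 ∧
                ∃ k : ℕ, ¬ p ∣ k ∧ l ^ k ∣ g.2 ∧ ¬ l ^ (k + 1) ∣ g.2) ∧
            g.1.degree < (N : WithBot ℕ) ∧ g.2.degree < (N : WithBot ℕ)} : ℝ) /
        (Nat.card {g : Polynomial K × Polynomial K //
            g.2 ≠ 0 ∧
            g.1.degree < (N : WithBot ℕ) ∧ g.2.degree < (N : WithBot ℕ)} : ℝ))
      Filter.atTop (nhds ((1 - 1 / (q : ℝ)) ^ 2)) :=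
  statement4_general p q hp K hcard
end

section
/- Let q be a power of a prime p. Let P be the subgroup of GL₃(𝔽_q) consisting of all matrices of the form [[1,0,a],[0,1,b],[0,0,c]] with a, b ∈ 𝔽_q and c ∈ 𝔽_q^×, and let U be its subgroup of such matrices with c = 1. If H is a subgroup of P whose order is divisible by q², then U ⊆ H. -/
open scoped MatrixGroups

/-!
A matrix of `P` with determinant `1` has `c = 1`, so `H ∩ ker det` lies in `U`, a set of `q²`
elements. The determinant maps `H` into `𝔽_qˣ`, whose order `q - 1` is prime to `q`, so `q²`
divides `|H ∩ ker det|`. Hence `H ∩ ker det = U`.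
-/

namespace Subgroup

variable {G M : Type*} [Group G] [Group M]

theorem dvd_card_ker_inf_of_coprime (f : G →* M) (H : Subgroup G) {n : ℕ}
    (hn : n ∣ Nat.card H) (hcop : n.Coprime (Nat.card (H.map f))) :
    n ∣ Nat.card (f.ker ⊓ H : Subgroup G) := by
  have hmul := relIndex_inf_mul_relIndex ⊥ f.ker H
  rw [relIndex_bot_left, bot_inf_eq, relIndex_bot_left, relIndex_ker] at hmul
  exact hcop.dvd_of_dvd_mul_right (hmul ▸ hn)

end Subgroup

theorem FiniteField.coprime_card_subgroup_units {K : Type*} [Field K] [Finite K]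
    (S : Subgroup Kˣ) : (Nat.card K).Coprime (Nat.card S) := by
  have hS : Nat.card S ∣ Nat.card K - 1 := Nat.card_units K ▸ S.card_subgroup_dvd_card
  have hK : (Nat.card K).Coprime (Nat.card K - 1) :=
    (Nat.coprime_self_sub_right Nat.card_pos).mpr (Nat.coprime_one_right _)
  exact hK.coprime_dvd_right hS

variable (K : Type*) [Field K]

/-- The group `U`; its elements act on the affine plane `z = 1` as translations. -/
def translations : Set (GL (Fin 3) K) :=
  {A | ∃ a b : K, (A : Matrix (Fin 3) (Fin 3) K) = !![1, 0, a; 0, 1, b; 0, 0, 1]}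

variable {K}

theorem ncard_translations_le [Finite K] : (translations K).ncard ≤ Nat.card K ^ 2 := by
  calc (translations K).ncard
      ≤ (Set.univ : Set (K × K)).ncard := by
        refine Set.ncard_le_ncard_of_injOn
          (fun A : GL (Fin 3) K => (A.val 0 2, A.val 1 2))
          (fun _ _ => Set.mem_univ _) ?_
        rintro A ⟨a, b, hA⟩ B ⟨a', b', hB⟩ hAB
        obtain ⟨rfl, rfl⟩ : a = a' ∧ b = b' := by simpa [hA, hB] using hAB
        exact Units.ext (hA.trans hB.symm)
    _ = Nat.card K ^ 2 := by rw [Set.ncard_univ, Nat.card_prod, sq]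

theorem mem_translations_of_det_eq_one {A : GL (Fin 3) K} {a b c : K}
    (hA : (A : Matrix (Fin 3) (Fin 3) K) = !![1, 0, a; 0, 1, b; 0, 0, c])
    (hdet : Matrix.GeneralLinearGroup.det A = 1) : A ∈ translations K := by
  have hc : c = 1 := by simpa [hA, Matrix.det_fin_three] using congrArg Units.val hdet
  exact ⟨a, b, hc ▸ hA⟩

theorem statement6_general (q : ℕ)
    (K : Type) [Field K] [Fintype K] (hcard : Fintype.card K = q)
    (H : Subgroup (GL (Fin 3) K))
    -- `H` is a subgroup of `P`, the group of matrices `[[1,0,a],[0,1,b],[0,0,c]]`, `c ≠ 0`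
    (hHP : ∀ A ∈ H, ∃ a b c : K, c ≠ 0 ∧
      (A : Matrix (Fin 3) (Fin 3) K) = !![1, 0, a; 0, 1, b; 0, 0, c])
    -- the order of `H` is divisible by `q²`
    (hq2 : q ^ 2 ∣ Nat.card H) :
    -- `U ⊆ H`
    ∀ A : GL (Fin 3) K,
      (∃ a b : K, (A : Matrix (Fin 3) (Fin 3) K) = !![1, 0, a; 0, 1, b; 0, 0, 1]) →
        A ∈ H := by
  rw [← Nat.card_eq_fintype_card] at hcard
  subst hcard
  set N := Matrix.GeneralLinearGroup.det.ker ⊓ H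
  have hN : (N : Set (GL (Fin 3) K)) ⊆ translations K := by
    rintro A ⟨hdet, hAH⟩
    obtain ⟨a, b, c, -, hA⟩ := hHP A hAH
    exact mem_translations_of_det_eq_one hA hdet
  have hdvd : Nat.card K ^ 2 ∣ Nat.card N :=
    Subgroup.dvd_card_ker_inf_of_coprime _ H hq2
      ((FiniteField.coprime_card_subgroup_units _).pow_left 2)
  have hcardN : (translations K).ncard ≤ (N : Set (GL (Fin 3) K)).ncard := by
    rw [← Nat.card_coe_set_eq]
    exact ncard_translations_le.trans (Nat.le_of_dvd Nat.card_pos hdvd)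
  have hNU := Set.eq_of_subset_of_ncard_le hN hcardN
  exact fun A hA => (hNU.ge hA).2

theorem statement6 (p q : ℕ) (hp : p.Prime) (hq : ∃ n : ℕ, q = p ^ n)
    (K : Type) [Field K] [Fintype K] (hcard : Fintype.card K = q)
    (H : Subgroup (GL (Fin 3) K))
    -- `H` is a subgroup of `P`, the group of matrices `[[1,0,a],[0,1,b],[0,0,c]]`, `c ≠ 0`
    (hHP : ∀ A ∈ H, ∃ a b c : K, c ≠ 0 ∧
      (A : Matrix (Fin 3) (Fin 3) K) = !![1, 0, a; 0, 1, b; 0, 0, c])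
    -- the order of `H` is divisible by `q²`
    (hq2 : q ^ 2 ∣ Nat.card H) :
    -- `U ⊆ H`
    ∀ A : GL (Fin 3) K,
      (∃ a b : K, (A : Matrix (Fin 3) (Fin 3) K) = !![1, 0, a; 0, 1, b; 0, 0, 1]) →
        A ∈ H :=
  statement6_general q K hcard H hHP hq2
end

section
/- Let q be a power of a prime p. Let P be the subgroup of GL₂(𝔽_q) consisting of all matrices of the form [[1,a],[0,c]] with a ∈ 𝔽_q and c ∈ 𝔽_q^×, and let U be its subgroup of such matrices with c = 1. If H is a subgroup of P whose order is divisible by q, then U ⊆ H. -/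
/-!
On `P` the determinant is the character `[[1,a],[0,c]] ↦ c`, whose kernel is `U`. Hence `H ∩ U` is
the kernel of `det` on `H`; its index `|det H|` divides `|𝔽_q^×| = q - 1`, which is prime to `q`.
So `q` divides `|H ∩ U| ≤ |U| = q`, which forces `H ∩ U = U`.
-/

open scoped MatrixGroups

open Matrix.GeneralLinearGroup

theorem Subgroup.card_inf_ker_mul_card_map {G M : Type*} [Group G] [Group M] (f : G →* M)
    (H : Subgroup G) : Nat.card (H ⊓ f.ker : Subgroup G) * Nat.card (H.map f) = Nat.card H := by
  rw [← relIndex_ker, ← inf_relIndex_left, ← relIndex_bot_left, ← relIndex_bot_left,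
    relIndex_mul_relIndex _ _ _ bot_le inf_le_left]

theorem Subgroup.le_of_inf_ker_le_of_card_dvd {G M : Type*} [Group G] [Group M] [Finite G]
    [Finite M] (f : G →* M) {H U : Subgroup G} (hker : H ⊓ f.ker ≤ U)
    (hdvd : Nat.card U ∣ Nat.card H) (hcop : (Nat.card U).Coprime (Nat.card M)) : U ≤ H := by
  have hcop' : (Nat.card U).Coprime (Nat.card (H.map f)) :=
    hcop.coprime_dvd_right (card_subgroup_dvd_card _)
  rw [← H.card_inf_ker_mul_card_map f] at hdvd
  have heq := eq_of_le_of_card_ge hker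
    (Nat.le_of_dvd Nat.card_pos (hcop'.dvd_of_dvd_mul_right hdvd))
  exact heq ▸ inf_le_left

namespace Matrix.GeneralLinearGroup

section Ring

variable (R : Type*) [Ring R]

def upperUnitriangular : Subgroup (GL (Fin 2) R) :=
  (upperRightHom (R := R)).toMonoidHom.range

theorem card_upperUnitriangular : Nat.card (upperUnitriangular R) = Nat.card R :=
  Nat.card_range_of_injective (f := (upperRightHom (R := R)).toMonoidHom)
    (injective_upperRightHom (R := R))

variable {R}

theorem mem_upperUnitriangular_iff {A : GL (Fin 2) R} :
    A ∈ upperUnitriangular R ↔ ∃ a : R, (A : Matrix (Fin 2) (Fin 2) R) = !![1, a; 0, 1] := by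
  simp [upperUnitriangular, Units.ext_iff, eq_comm]

end Ring

theorem mem_upperUnitriangular_of_det_eq_one {R : Type*} [CommRing R] {A : GL (Fin 2) R}
    {a c : R} (hA : (A : Matrix (Fin 2) (Fin 2) R) = !![1, a; 0, c]) (hdet : det A = 1) :
    A ∈ upperUnitriangular R := by
  have hc : c = 1 := by
    simpa [Units.ext_iff, Matrix.det_fin_two_of, hA] using hdet
  exact mem_upperUnitriangular_iff.mpr ⟨a, hc ▸ hA⟩

end Matrix.GeneralLinearGroup

theorem statement7_general (q : ℕ)
    (K : Type) [Field K] [Fintype K] (hcard : Fintype.card K = q)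
    (H : Subgroup (GL (Fin 2) K))
    -- `H` is a subgroup of `P`, the group of matrices `[[1,a],[0,c]]`, `c ≠ 0`
    (hHP : ∀ A ∈ H, ∃ a c : K, c ≠ 0 ∧
      (A : Matrix (Fin 2) (Fin 2) K) = !![1, a; 0, c])
    -- the order of `H` is divisible by `q`
    (hq1 : q ∣ Nat.card H) :
    -- `U ⊆ H`
    ∀ A : GL (Fin 2) K,
      (∃ a : K, (A : Matrix (Fin 2) (Fin 2) K) = !![1, a; 0, 1]) → A ∈ H := by
  have hcardU : Nat.card (upperUnitriangular K) = q := by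
    rw [card_upperUnitriangular K, Nat.card_eq_fintype_card, hcard]
  have hker : H ⊓ det.ker ≤ upperUnitriangular K := fun A ⟨hAH, hdet⟩ ↦
    let ⟨_, _, _, hA⟩ := hHP A hAH
    mem_upperUnitriangular_of_det_eq_one hA hdet
  have hcop : q.Coprime (Nat.card Kˣ) := by
    have hq : 1 ≤ q := hcard ▸ Fintype.card_pos
    rw [Nat.card_units, Nat.card_eq_fintype_card, hcard]
    exact (Nat.coprime_self_sub_right hq).mpr (Nat.coprime_one_right q)
  intro A hA
  exact Subgroup.le_of_inf_ker_le_of_card_dvd det hker (hcardU ▸ hq1) (hcardU ▸ hcop)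
    (mem_upperUnitriangular_iff.mpr hA)

theorem statement7 (p q : ℕ) (hp : p.Prime) (hq : ∃ n : ℕ, q = p ^ n)
    (K : Type) [Field K] [Fintype K] (hcard : Fintype.card K = q)
    (H : Subgroup (GL (Fin 2) K))
    -- `H` is a subgroup of `P`, the group of matrices `[[1,a],[0,c]]`, `c ≠ 0`
    (hHP : ∀ A ∈ H, ∃ a c : K, c ≠ 0 ∧
      (A : Matrix (Fin 2) (Fin 2) K) = !![1, a; 0, c])
    -- the order of `H` is divisible by `q`
    (hq1 : q ∣ Nat.card H) :
    -- `U ⊆ H`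
    ∀ A : GL (Fin 2) K,
      (∃ a : K, (A : Matrix (Fin 2) (Fin 2) K) = !![1, a; 0, 1]) → A ∈ H :=
  statement7_general q K hcard H hHP hq1
end

section
/- Let q be a power of a prime p and let G be a subgroup of GL₃(𝔽_q) such that G contains a Sylow p-subgroup of GL₃(𝔽_q) and G acts irreducibly on 𝔽_q³. Then SL₃(𝔽_q) ⊆ G. -/
/-!
For a nonzero vector `v`, the transvections `1 + v φᵀ` with `φ ⬝ᵥ v = 0` form an elementary
abelian `p`-subgroup of `GL₃(𝔽_q)`. It lies in a Sylow `p`-subgroup, so a conjugate of it lies in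
`G`: the group `G` contains every transvection with some nonzero direction `g v`.

The directions all of whose transvections lie in `G` form a `G`-invariant subspace. It is closed
under addition because, when `w` is not a multiple of `v`, a transvection with direction `v`
carries `w` to `v + w`, and conjugating by it carries the transvections with direction `w` to
those with direction `v + w`. By irreducibility this subspace is everything, so `G` contains the
elementary transvections, which generate `SL₃(𝔽_q)`.
-/

open scoped MatrixGroups Pointwise
open Matrix

theorem IsPGroup.exists_conj_smul_le_of_sylow_le {Γ : Type*} [Group Γ] [Finite Γ] {p : ℕ}
    [Fact p.Prime] {G H : Subgroup Γ} (hG : ∃ Q : Sylow p Γ, (Q : Subgroup Γ) ≤ G)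
    (hH : IsPGroup p H) : ∃ x : Γ, MulAut.conj x • H ≤ G := by
  obtain ⟨Q, hQG⟩ := hG
  obtain ⟨P, hHP⟩ := hH.exists_le_sylow
  obtain ⟨x, rfl⟩ := MulAction.exists_smul_eq Γ P Q
  refine ⟨x, le_trans ?_ hQG⟩
  rw [Sylow.coe_subgroup_smul]
  exact Subgroup.pointwise_smul_le_pointwise_smul_iff.mpr hHP

theorem exists_dotProduct_eq_zero_eq_one_of_notMem_span_singleton {ι K : Type*}
    [Fintype ι] [DecidableEq ι] [Field K] {v w : ι → K} (hw : w ∉ K ∙ v) :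
    ∃ ψ : ι → K, ψ ⬝ᵥ v = 0 ∧ ψ ⬝ᵥ w = 1 := by
  obtain ⟨f, hfw, hf_span⟩ := Submodule.exists_dual_map_eq_bot_of_notMem hw inferInstance
  have hf (u : ι → K) :
      (fun i => (f w)⁻¹ * f fun j => if i = j then 1 else 0) ⬝ᵥ u = (f w)⁻¹ * f u := by
    rw [LinearMap.pi_apply_eq_sum_univ f u, Finset.mul_sum, dotProduct]
    exact Finset.sum_congr rfl fun i _ => by rw [smul_eq_mul]; ring
  have hfv : f v ∈ (K ∙ v).map f := Submodule.mem_map_of_mem (Submodule.mem_span_singleton_self v)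
  rw [hf_span, Submodule.mem_bot] at hfv
  exact ⟨_, by rw [hf, hfv, mul_zero], by rw [hf, inv_mul_cancel₀ hfw]⟩

namespace Matrix.SpecialLinearGroup

variable {ι F : Type*} [Fintype ι] [DecidableEq ι] [Field F]

theorem diag2n_eq_transvection_prod {i j : ι} (hij : i ≠ j) (a : F) (ha : a ≠ 0) :
    diag2n hij a ha = transvection hij a * transvection hij.symm (-a⁻¹) * transvection hij a *
      transvection hij (-1) * transvection hij.symm 1 * transvection hij (-1) := by
  ext k l
  simp only [coe_mul, transvection_coe, diag2n_coe, mul_add, add_mul, mul_one, one_mul,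
    single_mul_single_same, single_mul_single_of_ne _ _ _ _ hij.symm,
    single_mul_single_of_ne _ _ _ _ hij, add_zero]
  simp only [add_apply, single_apply, diagonal_apply, one_apply]
  by_cases hki : k = i <;> by_cases hkj : k = j <;> by_cases hli : l = i <;>
    by_cases hlj : l = j <;> simp_all [eq_comm]

theorem mem_of_forall_transvection_mem [Nontrivial ι] {H : Subgroup (SpecialLinearGroup ι F)}
    (hH : ∀ (i j : ι) (hij : i ≠ j) (c : F), transvection hij c ∈ H)
    (M : SpecialLinearGroup ι F) : M ∈ H := by
  refine diagonal_transvection_induction' (· ∈ H) M (fun i j hij c hc => ?_) hH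
    (fun _ _ => mul_mem)
  rw [diag2n_eq_transvection_prod]
  repeat' apply mul_mem
  all_goals exact hH _ _ _ _

end Matrix.SpecialLinearGroup

section Transvection

variable {ι R : Type*} [Fintype ι] [DecidableEq ι] [CommRing R]

def transvectionGL (v φ : ι → R) (h : φ ⬝ᵥ v = 0) : GL ι R where
  val := 1 + vecMulVec v φ
  inv := 1 - vecMulVec v φ
  val_inv := by simp [mul_sub, add_mul, vecMulVec_mul_vecMulVec, h]
  inv_val := by simp [sub_mul, mul_add, vecMulVec_mul_vecMulVec, h]

@[simp]
theorem coe_transvectionGL (v φ : ι → R) (h : φ ⬝ᵥ v = 0) :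
    (transvectionGL v φ h : Matrix ι ι R) = 1 + vecMulVec v φ := rfl

theorem transvectionGL_mulVec (v φ : ι → R) (h : φ ⬝ᵥ v = 0) (w : ι → R) :
    (transvectionGL v φ h : Matrix ι ι R) *ᵥ w = w + (φ ⬝ᵥ w) • v := by
  simp [add_mulVec, vecMulVec_mulVec]

@[simp]
theorem transvectionGL_zero_left (φ : ι → R) (h : φ ⬝ᵥ 0 = 0) : transvectionGL 0 φ h = 1 :=
  Units.ext <| by simp

@[simp]
theorem transvectionGL_zero_right (v : ι → R) (h : (0 : ι → R) ⬝ᵥ v = 0) :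
    transvectionGL v 0 h = 1 :=
  Units.ext <| by simp

theorem transvectionGL_smul_left (c : R) (v φ : ι → R) (h : φ ⬝ᵥ (c • v) = 0) :
    transvectionGL (c • v) φ h =
      transvectionGL v (c • φ) (by rwa [smul_dotProduct, ← dotProduct_smul]) :=
  Units.ext <| by simp [smul_vecMulVec, vecMulVec_smul]

theorem transvectionGL_mul {v φ ψ : ι → R} (hφ : φ ⬝ᵥ v = 0) (hψ : ψ ⬝ᵥ v = 0) :
    transvectionGL v φ hφ * transvectionGL v ψ hψ =
      transvectionGL v (φ + ψ) (by rw [add_dotProduct, hφ, hψ, add_zero]) :=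
  Units.ext <| by simp [mul_add, add_mul, vecMulVec_mul_vecMulVec, hφ, vecMulVec_add, add_assoc]

theorem transvectionGL_pow {v φ : ι → R} (h : φ ⬝ᵥ v = 0) (n : ℕ) :
    transvectionGL v φ h ^ n =
      transvectionGL v (n • φ) (by rw [smul_dotProduct, h, smul_zero]) := by
  induction n with
  | zero => simp
  | succ n ih => rw [pow_succ, ih, transvectionGL_mul]; congr 1; rw [succ_nsmul]

theorem conj_transvectionGL (x : GL ι R) {v φ : ι → R} (h : φ ⬝ᵥ v = 0) :
    x * transvectionGL v φ h * x⁻¹ =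
      transvectionGL ((x : Matrix ι ι R) *ᵥ v) (φ ᵥ* (x⁻¹ : GL ι R))
        (by rw [dotProduct_mulVec, vecMul_vecMul, ← Units.val_mul, inv_mul_cancel,
          Units.val_one, vecMul_one, h]) :=
  Units.ext <| by simp [mul_add, add_mul, mul_vecMulVec, vecMulVec_mul]

theorem Matrix.SpecialLinearGroup.toGL_transvection {i j : ι} (hij : i ≠ j) (c : R) :
    SpecialLinearGroup.toGL (SpecialLinearGroup.transvection hij c) =
      transvectionGL (Pi.single i 1) (Pi.single j c) (by simp [hij]) :=
  Units.ext <| by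
    ext k l
    simp [SpecialLinearGroup.transvection_coe, vecMulVec_apply, single_apply, Pi.single_apply]
    grind

def transvectionSubgroup (v : ι → R) : Subgroup (GL ι R) where
  carrier := {A | ∃ φ h, transvectionGL v φ h = A}
  mul_mem' := by
    rintro _ _ ⟨φ, hφ, rfl⟩ ⟨ψ, hψ, rfl⟩
    exact ⟨_, _, (transvectionGL_mul hφ hψ).symm⟩
  one_mem' := ⟨0, zero_dotProduct v, transvectionGL_zero_right v _⟩
  inv_mem' := by
    rintro _ ⟨φ, hφ, rfl⟩
    refine ⟨-φ, by rw [neg_dotProduct, hφ, neg_zero], eq_inv_of_mul_eq_one_left ?_⟩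
    simp [transvectionGL_mul]

theorem transvectionGL_mem_transvectionSubgroup (v φ : ι → R) (h : φ ⬝ᵥ v = 0) :
    transvectionGL v φ h ∈ transvectionSubgroup v :=
  ⟨φ, h, rfl⟩

theorem transvectionSubgroup_zero : transvectionSubgroup (0 : ι → R) = ⊥ := by
  rw [eq_bot_iff]
  rintro _ ⟨φ, h, rfl⟩
  simp

theorem transvectionSubgroup_smul_le (c : R) (v : ι → R) :
    transvectionSubgroup (c • v) ≤ transvectionSubgroup v := by
  rintro _ ⟨φ, h, rfl⟩
  rw [transvectionGL_smul_left]
  apply transvectionGL_mem_transvectionSubgroup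

theorem transvectionSubgroup_mulVec (x : GL ι R) (v : ι → R) :
    transvectionSubgroup ((x : Matrix ι ι R) *ᵥ v) = MulAut.conj x • transvectionSubgroup v := by
  ext A
  rw [Subgroup.mem_smul_pointwise_iff_exists]
  constructor
  · rintro ⟨φ, h, rfl⟩
    refine ⟨transvectionGL v (φ ᵥ* (x : Matrix ι ι R)) (by rwa [← dotProduct_mulVec]),
      transvectionGL_mem_transvectionSubgroup _ _ _, ?_⟩
    rw [MulAut.smul_def, MulAut.conj_apply, conj_transvectionGL]
    congr 1
    rw [vecMul_vecMul, ← Units.val_mul, mul_inv_cancel, Units.val_one, vecMul_one]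
  · rintro ⟨_, ⟨φ, h, rfl⟩, rfl⟩
    exact ⟨_, _, (conj_transvectionGL x h).symm⟩

theorem isPGroup_transvectionSubgroup {K : Type*} [Field K] [Fintype K] {p n : ℕ}
    (hcard : Fintype.card K = p ^ n) (v : ι → K) : IsPGroup p (transvectionSubgroup v) := by
  rintro ⟨_, φ, h, rfl⟩
  have hφ : Fintype.card K • φ = 0 := by
    rw [← Nat.cast_smul_eq_nsmul K, FiniteField.cast_card_eq_zero, zero_smul]
  refine ⟨n, Subtype.ext ?_⟩
  simp only [← hcard, SubmonoidClass.coe_pow, transvectionGL_pow, hφ, transvectionGL_zero_right,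
    OneMemClass.coe_one]

end Transvection

section Directions

variable {ι K : Type*} [Fintype ι] [DecidableEq ι] [Field K] {G : Subgroup (GL ι K)}

theorem transvectionSubgroup_mulVec_le {x : GL ι K} (hx : x ∈ G) {v : ι → K}
    (hv : transvectionSubgroup v ≤ G) : transvectionSubgroup ((x : Matrix ι ι K) *ᵥ v) ≤ G := by
  rw [transvectionSubgroup_mulVec, ← Subgroup.conj_smul_eq_self_of_mem hx]
  exact Subgroup.pointwise_smul_le_pointwise_smul_iff.mpr hv

theorem transvectionSubgroup_add_le {v w : ι → K} (hv : transvectionSubgroup v ≤ G)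
    (hw : transvectionSubgroup w ≤ G) : transvectionSubgroup (v + w) ≤ G := by
  by_cases hwv : w ∈ K ∙ v
  · obtain ⟨c, rfl⟩ := Submodule.mem_span_singleton.mp hwv
    rw [show v + c • v = (1 + c) • v by rw [add_smul, one_smul]]
    exact (transvectionSubgroup_smul_le _ v).trans hv
  · obtain ⟨ψ, hψv, hψw⟩ :=
      exists_dotProduct_eq_zero_eq_one_of_notMem_span_singleton hwv
    have hψ := transvectionSubgroup_mulVec_le
      (hv (transvectionGL_mem_transvectionSubgroup v ψ hψv)) hw
    rwa [transvectionGL_mulVec, hψw, one_smul, add_comm] at hψ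

def transvectionDirections (G : Subgroup (GL ι K)) : Submodule K (ι → K) where
  carrier := {v | transvectionSubgroup v ≤ G}
  add_mem' := transvectionSubgroup_add_le
  zero_mem' := by simp [transvectionSubgroup_zero]
  smul_mem' c v hv := (transvectionSubgroup_smul_le c v).trans hv

theorem mem_transvectionDirections {v : ι → K} :
    v ∈ transvectionDirections G ↔ transvectionSubgroup v ≤ G := Iff.rfl

theorem mem_of_transvectionDirections_eq_top [Nontrivial ι] (hG : transvectionDirections G = ⊤)
    {A : GL ι K} (hA : (A : Matrix ι ι K).det = 1) : A ∈ G := by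
  suffices h : (⟨A, hA⟩ : SpecialLinearGroup ι K) ∈ G.comap SpecialLinearGroup.toGL from
    (show SpecialLinearGroup.toGL ⟨A, hA⟩ = A from Units.ext rfl) ▸ h
  refine SpecialLinearGroup.mem_of_forall_transvection_mem (fun i j hij c => ?_) _
  have hdir : Pi.single i 1 ∈ transvectionDirections G := hG ▸ Submodule.mem_top
  rw [Subgroup.mem_comap, SpecialLinearGroup.toGL_transvection]
  exact hdir (transvectionGL_mem_transvectionSubgroup _ _ _)

end Directions

theorem statement9 (p q : ℕ) (hp : p.Prime) (hq : ∃ n : ℕ, q = p ^ n)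
    (K : Type) [Field K] [Fintype K] (hcard : Fintype.card K = q)
    (G : Subgroup (GL (Fin 3) K))
    -- `G` contains a Sylow `p`-subgroup of `GL₃(𝔽_q)`
    (hsyl : ∃ Q : Sylow p (GL (Fin 3) K), (Q : Subgroup (GL (Fin 3) K)) ≤ G)
    -- `G` acts irreducibly on `𝔽_q³`
    (hirr : ∀ W : Submodule K (Fin 3 → K),
      (∀ A ∈ G, ∀ v ∈ W, (A : Matrix (Fin 3) (Fin 3) K).mulVec v ∈ W) → W = ⊥ ∨ W = ⊤) :
    -- `SL₃(𝔽_q) ⊆ G`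
    ∀ A : GL (Fin 3) K, (A : Matrix (Fin 3) (Fin 3) K).det = 1 → A ∈ G := by
  intro A hA
  have : Fact p.Prime := ⟨hp⟩
  obtain ⟨n, rfl⟩ := hq
  obtain ⟨x, hx⟩ := IsPGroup.exists_conj_smul_le_of_sylow_le hsyl
    (isPGroup_transvectionSubgroup hcard (Pi.single 0 1))
  have hdir : (x : Matrix (Fin 3) (Fin 3) K) *ᵥ Pi.single 0 1 ∈ transvectionDirections G := by
    rwa [mem_transvectionDirections, transvectionSubgroup_mulVec]
  have hne : (x : Matrix (Fin 3) (Fin 3) K) *ᵥ Pi.single 0 1 ≠ 0 := by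
    rw [← mulVec_zero (x : Matrix (Fin 3) (Fin 3) K), ne_eq,
      (mulVec_injective_of_isUnit x.isUnit).eq_iff]
    exact Pi.single_ne_zero_iff.mpr one_ne_zero
  have htop : transvectionDirections G = ⊤ :=
    (hirr _ fun B hB _ hv => transvectionSubgroup_mulVec_le hB hv).resolve_left
      ((Submodule.ne_bot_iff _).mpr ⟨_, hdir, hne⟩)
  exact mem_of_transvectionDirections_eq_top htop hA
end

section
/- Let q ≥ 4 be a power of a prime p. Let G be a subgroup of GL₂(𝔽_q) such that: (i) the determinant map sends G onto 𝔽_q^×; (ii) G acts irreducibly on 𝔽_q²; and (iii) q divides |G|. Then G = GL₂(𝔽_q). -/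
open scoped MatrixGroups

/-!
A Sylow `p`-subgroup `Q` of `G` has order at least `q`. As a `p`-group it fixes a nonzero vector
`v`, because `p` divides the number `q²` of vectors, and it lies in `SL₂`, because in
characteristic `p` the only `p`-power root of unity is `1`. In dimension two the stabilizer of `v`
in `SL₂` is a group of transvections of order `q`, so `Q` is all of it. By irreducibility some
`g ∈ G` moves `v` off its line, and the stabilizers of `v` and `g • v` in `SL₂`, conjugate to the
upper and lower unitriangular groups, generate `SL₂`. Surjectivity of the determinant finishes.
-/

namespace Matrix.GeneralLinearGroup

section CommRing

variable {ι K : Type*} [Fintype ι] [DecidableEq ι] [CommRing K]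

def slStabilizer (v : ι → K) : Subgroup (GL ι K) :=
  MulAction.stabilizer (GL ι K) v ⊓ det.ker

theorem mem_slStabilizer {v : ι → K} {g : GL ι K} :
    g ∈ slStabilizer v ↔ g • v = v ∧ det g = 1 :=
  Iff.rfl

theorem slStabilizer_smul (g : GL ι K) (v : ι → K) :
    slStabilizer (g • v) = (slStabilizer v).map (MulAut.conj g).toMonoidHom := by
  rw [slStabilizer, slStabilizer, MulAction.stabilizer_smul_eq_stabilizer_map_conj,
    Subgroup.map_inf_eq _ _ _ (MulAut.conj g).injective]
  congr 1
  exact (Subgroup.Normal.map_conj_eq _ g).symm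

def transvection {i j : ι} (hij : i ≠ j) (c : K) : GL ι K :=
  ⟨Matrix.transvection i j c, Matrix.transvection i j (-c),
    by rw [transvection_mul_transvection_same _ _ hij, add_neg_cancel, transvection_zero],
    by rw [transvection_mul_transvection_same _ _ hij, neg_add_cancel, transvection_zero]⟩

theorem transvection_smul {i j : ι} (hij : i ≠ j) (c : K) (x : ι → K) :
    transvection hij c • x = x + (c * x j) • Pi.single i 1 := by
  change (1 + single i j c) *ᵥ x = _
  rw [add_mulVec, one_mulVec, single_mulVec_eq]

theorem transvection_mem_slStabilizer {i j : ι} (hij : i ≠ j) (c : K) :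
    transvection hij c ∈ slStabilizer (Pi.single i 1) := by
  refine mem_slStabilizer.2 ⟨?_, Units.ext ?_⟩
  · rw [transvection_smul, Pi.single_eq_of_ne hij.symm, mul_zero, zero_smul, add_zero]
  · exact det_transvection_of_ne i j hij c

theorem exists_ne_zero_forall_smul_eq_of_isPGroup
    [Nonempty ι] [Finite K] {p : ℕ} [Fact p.Prime] [CharP K p]
    {Q : Subgroup (GL ι K)} (hQ : IsPGroup p Q) :
    ∃ v : ι → K, v ≠ 0 ∧ ∀ g ∈ Q, g • v = v := by
  cases nonempty_fintype K
  have hp : p ∣ Nat.card (ι → K) := by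
    rw [Nat.card_fun, Nat.card_eq_fintype_card (α := K)]
    exact dvd_pow ((CharP.cast_eq_zero_iff K p _).1 (Nat.cast_card_eq_zero K))
      (Nat.card_pos (α := ι)).ne'
  obtain ⟨v, hv, hv0⟩ := hQ.exists_fixed_point_of_prime_dvd_card_of_fixed_point (ι → K) hp
    (a := 0) (fun g => smul_zero g)
  exact ⟨v, hv0.symm, fun g hg => hv ⟨g, hg⟩⟩

theorem le_ker_det_of_isPGroup [IsReduced K] {p : ℕ} [ExpChar K p]
    {Q : Subgroup (GL ι K)} (hQ : IsPGroup p Q) : Q ≤ det.ker := by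
  intro g hg
  obtain ⟨k, hk⟩ := hQ ⟨g, hg⟩
  have hgk : g ^ p ^ k = 1 := congrArg Subtype.val hk
  rw [MonoidHom.mem_ker, ← Units.val_inj]
  simpa using (ExpChar.pow_prime_pow_mul_eq_one_iff p k 1 (det g : K)).1
    (by rw [mul_one, ← Units.val_pow_eq_pow_val, ← map_pow, hgk, map_one, Units.val_one])

theorem eq_top_of_ker_det_le {G : Subgroup (GL ι K)} (hker : det.ker ≤ G)
    (hdet : ∀ u : Kˣ, ∃ A ∈ G, det A = u) : G = ⊤ := by
  refine eq_top_iff.2 fun B _ => ?_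
  obtain ⟨A, hA, hAB⟩ := hdet (det B)
  have hBA : B * A⁻¹ ∈ G :=
    hker (by rw [MonoidHom.mem_ker, map_mul, map_inv, hAB, mul_inv_cancel])
  simpa using mul_mem hBA hA

end CommRing

section Field

variable {ι K : Type*} [Fintype ι] [DecidableEq ι] [Field K]

theorem exists_smul_single_eq (b : ι → ι → K) (hb : LinearIndependent K b) :
    ∃ h : GL ι K, ∀ i, h • Pi.single i 1 = b i := by
  have hunit : IsUnit (of b)ᵀ := linearIndependent_cols_iff_isUnit.1 hb
  exact ⟨hunit.unit, fun i => mulVec_single_one _ i⟩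

theorem exists_mem_linearIndependent_smul {G : Subgroup (GL ι K)}
    (hirr : ∀ W : Submodule K (ι → K),
      (∀ A ∈ G, ∀ v ∈ W, A • v ∈ W) → W = ⊥ ∨ W = ⊤)
    (hι : 1 < Fintype.card ι) {v : ι → K} (hv : v ≠ 0) :
    ∃ g ∈ G, LinearIndependent K ![v, g • v] := by
  by_contra! hdep
  have hinv : ∀ A ∈ G, ∀ w ∈ Submodule.span K {v}, A • w ∈ Submodule.span K {v} := by
    intro A hA w hw
    obtain ⟨a, rfl⟩ := Submodule.mem_span_singleton.1 hw
    obtain ⟨b, hb⟩ : ∃ b : K, b • v = A • v := by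
      simpa [LinearIndependent.pair_iff' hv] using hdep A hA
    rw [smul_comm, ← hb]
    exact Submodule.smul_mem _ _ (Submodule.smul_mem _ _ (Submodule.mem_span_singleton_self v))
  rcases hirr _ hinv with hbot | htop
  · exact hv (Submodule.span_singleton_eq_bot.1 hbot)
  · have := finrank_span_singleton (K := K) hv
    rw [htop, finrank_top, Module.finrank_fintype_fun_eq_card] at this
    omega

end Field

section Fin2

variable {K : Type*} [Field K]

theorem val_eq_of_mem_slStabilizer_single_zero {g : GL (Fin 2) K}
    (hg : g ∈ slStabilizer (Pi.single 0 1)) :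
    (g : Matrix (Fin 2) (Fin 2) K) = !![1, g 0 1; 0, 1] := by
  obtain ⟨hfix, hdet⟩ := mem_slStabilizer.1 hg
  have hcol : (g : Matrix (Fin 2) (Fin 2) K).col 0 = Pi.single 0 1 := by
    rw [← mulVec_single_one]; exact hfix
  have h00 : g 0 0 = 1 := by simpa using congrFun hcol 0
  have h10 : g 1 0 = 0 := by simpa using congrFun hcol 1
  have h11 : g 1 1 = 1 := by
    simpa [det_fin_two, h00, h10] using congrArg Units.val hdet
  ext i j
  fin_cases i <;> fin_cases j <;> simp [h00, h10, h11]

theorem card_slStabilizer_single_zero_le [Finite K] :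
    Nat.card (slStabilizer (Pi.single 0 1 : Fin 2 → K)) ≤ Nat.card K := by
  refine Nat.card_le_card_of_injective (fun g => (g : GL (Fin 2) K) 0 1) fun g h hgh => ?_
  apply Subtype.ext (Units.ext ?_)
  rw [val_eq_of_mem_slStabilizer_single_zero g.2, val_eq_of_mem_slStabilizer_single_zero h.2]
  exact congrArg (fun c => !![1, c; 0, 1]) hgh

theorem card_slStabilizer_le [Finite K] {v : Fin 2 → K} (hv : v ≠ 0) :
    Nat.card (slStabilizer v) ≤ Nat.card K := by
  obtain ⟨w, hvw⟩ := exists_linearIndependent_pair_of_one_lt_finrank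
    (by rw [Module.finrank_fin_fun]; norm_num) hv
  obtain ⟨h, hh⟩ := exists_smul_single_eq _ hvw
  rw [show v = h • Pi.single 0 1 from (hh 0).symm, slStabilizer_smul,
    Subgroup.card_map_of_injective (MulAut.conj h).injective]
  exact card_slStabilizer_single_zero_le

theorem exists_mem_sup_smul_eq_single_zero {x : Fin 2 → K} (hx : x ≠ 0) :
    ∃ u ∈ slStabilizer (Pi.single 0 1 : Fin 2 → K) ⊔ slStabilizer (Pi.single 1 1),
      u • x = Pi.single 0 1 := by
  have key : ∀ y : Fin 2 → K, y 1 ≠ 0 → ∃ u ∈ slStabilizer (Pi.single 0 1 : Fin 2 → K) ⊔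
      slStabilizer (Pi.single 1 1), u • y = Pi.single 0 1 := by
    intro y hy
    -- `u₀` slides `y` along `e₀` to `(1, y 1)`, then `u₁` slides that along `e₁` to `e₀`.
    let u₀ := transvection (zero_ne_one : (0 : Fin 2) ≠ 1) ((1 - y 0) / y 1)
    let u₁ := transvection (one_ne_zero : (1 : Fin 2) ≠ 0) (-y 1)
    refine ⟨u₁ * u₀, mul_mem (Subgroup.mem_sup_right (transvection_mem_slStabilizer _ _))
      (Subgroup.mem_sup_left (transvection_mem_slStabilizer _ _)), ?_⟩
    rw [mul_smul, transvection_smul, transvection_smul]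
    ext i
    fin_cases i <;> simp <;> field_simp <;> ring
  by_cases hx1 : x 1 = 0
  · have hx0 : x 0 ≠ 0 := fun hx0 => hx (by ext i; fin_cases i <;> simp [hx0, hx1])
    let u₁ := transvection (one_ne_zero : (1 : Fin 2) ≠ 0) (1 : K)
    obtain ⟨u, hu, hux⟩ := key (u₁ • x) (by rw [transvection_smul]; simp [hx0, hx1])
    exact ⟨u * u₁, mul_mem hu (Subgroup.mem_sup_right (transvection_mem_slStabilizer _ _)),
      by rw [mul_smul, hux]⟩
  · exact key x hx1

theorem ker_det_le_sup_slStabilizer_single :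
    (det.ker : Subgroup (GL (Fin 2) K)) ≤
      slStabilizer (Pi.single 0 1 : Fin 2 → K) ⊔ slStabilizer (Pi.single 1 1) := by
  intro g hg
  have hS : slStabilizer (Pi.single 0 1 : Fin 2 → K) ⊔ slStabilizer (Pi.single 1 1) ≤ det.ker :=
    sup_le inf_le_right inf_le_right
  have hx : g • (Pi.single 0 1 : Fin 2 → K) ≠ 0 := (smul_eq_zero_iff_eq g).not.2 (by simp)
  obtain ⟨u, hu, hux⟩ := exists_mem_sup_smul_eq_single_zero hx
  have hug : u * g ∈ slStabilizer (Pi.single 0 1) :=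
    mem_slStabilizer.2 ⟨by rw [mul_smul, hux], by rw [map_mul, hS hu, hg, mul_one]⟩
  simpa using mul_mem (inv_mem hu) (Subgroup.mem_sup_left hug)

theorem ker_det_le_sup_slStabilizer {v w : Fin 2 → K} (hvw : LinearIndependent K ![v, w]) :
    (det.ker : Subgroup (GL (Fin 2) K)) ≤ slStabilizer v ⊔ slStabilizer w := by
  obtain ⟨h, hh⟩ := exists_smul_single_eq _ hvw
  have hv : v = h • Pi.single 0 1 := (hh 0).symm
  have hw : w = h • Pi.single 1 1 := (hh 1).symm
  rw [hv, hw, slStabilizer_smul, slStabilizer_smul, ← Subgroup.map_sup,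
    ← Subgroup.Normal.map_conj_eq det.ker h]
  exact Subgroup.map_mono ker_det_le_sup_slStabilizer_single

end Fin2

end Matrix.GeneralLinearGroup

open Matrix.GeneralLinearGroup in
theorem statement11_general (p q : ℕ) (hp : p.Prime) (hq : ∃ n : ℕ, q = p ^ n)
    (K : Type) [Field K] [Fintype K] (hcard : Fintype.card K = q)
    (G : Subgroup (GL (Fin 2) K))
    -- (i) the determinant map sends `G` onto `𝔽_q^×`
    (hdet : ∀ u : Kˣ, ∃ A ∈ G, Matrix.GeneralLinearGroup.det A = u)
    -- (ii) `G` acts irreducibly on `𝔽_q²`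
    (hirr : ∀ W : Submodule K (Fin 2 → K),
      (∀ A ∈ G, ∀ v ∈ W, (A : Matrix (Fin 2) (Fin 2) K).mulVec v ∈ W) → W = ⊥ ∨ W = ⊤)
    -- (iii) `q` divides `|G|`
    (hord : q ∣ Nat.card G) :
    G = ⊤ := by
  have := Fact.mk hp
  obtain ⟨n, rfl⟩ := hq
  have : CharP K p := charP_of_card_eq_prime_pow hcard
  obtain ⟨P⟩ : Nonempty (Sylow p G) := inferInstance
  let Q := P.map G.subtype
  have hQ : IsPGroup p Q := P.isPGroup'.map _
  have hQcard : Nat.card K ≤ Nat.card Q := by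
    rw [Subgroup.card_map_of_injective G.subtype_injective, Nat.card_eq_fintype_card, hcard]
    exact Nat.le_of_dvd Nat.card_pos (P.pow_dvd_card_of_pow_dvd_card hord)
  obtain ⟨v, hv, hQv⟩ := exists_ne_zero_forall_smul_eq_of_isPGroup hQ
  have hQ_eq : Q = slStabilizer v :=
    Subgroup.eq_of_le_of_card_ge (fun g hg => ⟨hQv g hg, le_ker_det_of_isPGroup hQ hg⟩)
      ((card_slStabilizer_le hv).trans hQcard)
  have hvG : slStabilizer v ≤ G := hQ_eq ▸ Subgroup.map_subtype_le _
  obtain ⟨g, hg, hind⟩ := exists_mem_linearIndependent_smul hirr (by simp) hv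
  have hgvG : slStabilizer (g • v) ≤ G := by
    rw [slStabilizer_smul]
    rintro _ ⟨x, hx, rfl⟩
    exact mul_mem (mul_mem hg (hvG hx)) (inv_mem hg)
  exact eq_top_of_ker_det_le ((ker_det_le_sup_slStabilizer hind).trans (sup_le hvG hgvG)) hdet

theorem statement11 (p q : ℕ) (hp : p.Prime) (hq : ∃ n : ℕ, q = p ^ n) (hq4 : 4 ≤ q)
    (K : Type) [Field K] [Fintype K] (hcard : Fintype.card K = q)
    (G : Subgroup (GL (Fin 2) K))
    -- (i) the determinant map sends `G` onto `𝔽_q^×`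
    (hdet : ∀ u : Kˣ, ∃ A ∈ G, Matrix.GeneralLinearGroup.det A = u)
    -- (ii) `G` acts irreducibly on `𝔽_q²`
    (hirr : ∀ W : Submodule K (Fin 2 → K),
      (∀ A ∈ G, ∀ v ∈ W, (A : Matrix (Fin 2) (Fin 2) K).mulVec v ∈ W) → W = ⊥ ∨ W = ⊤)
    -- (iii) `q` divides `|G|`
    (hord : q ∣ Nat.card G) :
    G = ⊤ :=
  statement11_general p q hp hq K hcard G hdet hirr hord
end
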